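/- arXiv:1508.06891 — 3 statements merged into one kernel-verified Lean document; each statement's English description precedes it below -/
import Mathlib

section
/- Let 0<q<1, real numbers 0 ≤ α ≤ β, and integers n ≥ 1, k ≥ 0. Set a_k = q([k]_q + q^{k-1}α)/([n]_q + β) and b_k = ([k+1]_q + q^k α)/([n]_q + β). Then ∫_{a_k}^{b_k} t d_q t = ([2]_q [k]_q + q^k (1 + 2α)) / ([2]_q ([n]_q + β)²). -/
open scoped BigOperators

noncomputable section

/-- The `q`-integer `[n]_q = ∑_{i=0}^{n-1} q^i`. -/
def qInt (q : ℝ) (n : ℕ) : ℝ := ∑ i ∈ Finset.range n, q ^ i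

/-- The `q`-factorial `[n]_q! = ∏_{j=1}^{n} [j]_q`. -/
def qFact (q : ℝ) (n : ℕ) : ℝ := ∏ j ∈ Finset.range n, qInt q (j + 1)

/-- The `q`-Jackson integral `∫_0^c g(t) d_q t = (1-q) c ∑_{j=0}^∞ q^j g (c q^j)`. -/
def jackson0 (q c : ℝ) (g : ℝ → ℝ) : ℝ := (1 - q) * c * ∑' j : ℕ, q ^ j * g (c * q ^ j)

/-- The `q`-Jackson integral `∫_a^b g(t) d_q t`. -/
def jackson (q a b : ℝ) (g : ℝ → ℝ) : ℝ := jackson0 q b g - jackson0 q a g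

/-- The `q`-derivative operator, with the convention `(D_q g)(0) = 0`. -/
def qD (q : ℝ) (g : ℝ → ℝ) : ℝ → ℝ := fun x =>
  if x = 0 then 0 else (g x - g (q * x)) / ((1 - q) * x)

/-- The weights `w_k(x) = q^{k(k-1)/2} (D_q^k φ)(x) (−x)^k / [k]_q!`. -/
def w (q : ℝ) (φ : ℝ → ℝ) (k : ℕ) (x : ℝ) : ℝ :=
  q ^ (k * (k - 1) / 2) * ((qD q)^[k] φ) x * (-x) ^ k / qFact q k

/-- Lower node `a_k = q([k]_q + q^{k-1} α)/([n]_q + β)`. -/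
def aNode (q α β : ℝ) (n k : ℕ) : ℝ :=
  q * (qInt q k + q ^ ((k : ℤ) - 1) * α) / (qInt q n + β)

/-- Upper node `b_k = ([k+1]_q + q^k α)/([n]_q + β)`. -/
def bNode (q α β : ℝ) (n k : ℕ) : ℝ :=
  (qInt q (k + 1) + q ^ k * α) / (qInt q n + β)

/-- The Stancu type `q`-Baskakov–Kantorovich operator
`L*_n(f; q, x) = ([n]_q + β) ∑_{k=0}^∞ w_k(x) ∫_{a_k}^{b_k} f(q^{1-k} t) d_q t`. -/
def Lop (q α β : ℝ) (n : ℕ) (φ : ℝ → ℝ) (f : ℝ → ℝ) (x : ℝ) : ℝ :=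
  (qInt q n + β) * ∑' k : ℕ, w q φ k x *
    jackson q (aNode q α β n k) (bNode q α β n k) (fun t => f (q ^ (1 - (k : ℤ)) * t))

/-- The moment identities (M) at `x` with parameter `m`. -/
def MomentM (q α β : ℝ) (n m : ℕ) (φ : ℝ → ℝ) (x : ℝ) : Prop :=
  Lop q α β n φ (fun _ => 1) x = 1 ∧
  Lop q α β n φ (fun t => t) x =
    qInt q n * x / (qInt q n + β) + q * (1 + 2 * α) / (qInt q 2 * (qInt q n + β)) ∧
  Lop q α β n φ (fun t => t ^ 2) x =
    qInt q n * qInt q m * x ^ 2 / (q * (qInt q n + β) ^ 2)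
      + qInt q n * (qInt q 3 + q * ((1 + 3 * α) * qInt q 2 + 1)) * x
          / (qInt q 3 * (qInt q n + β) ^ 2)
      + q ^ 2 * (1 + 3 * α + 3 * α ^ 2) / (qInt q 3 * (qInt q n + β) ^ 2)

/-- The quantity `δ_n(x)`. -/
def deltaN (q α β : ℝ) (n m : ℕ) (x : ℝ) : ℝ :=
  (qInt q n * qInt q m / (q * (qInt q n + β) ^ 2) + 1 - 2 * qInt q n / (qInt q n + β)) * x ^ 2
  + (qInt q n * (qInt q 3 + q * ((1 + 3 * α) * qInt q 2 + 1))
        / (qInt q 3 * (qInt q n + β) ^ 2)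
      - 2 * q * (1 + 2 * α) / (qInt q 2 * (qInt q n + β))) * x
  + q ^ 2 * (1 + 3 * α + 3 * α ^ 2) / (qInt q 3 * (qInt q n + β) ^ 2)

open scoped Classical in
/-- Statistical convergence of a real sequence. -/
def StatLim (x : ℕ → ℝ) (L : ℝ) : Prop :=
  ∀ ε > 0, Filter.Tendsto
    (fun n => (((Finset.range n).filter (fun j => ε ≤ |x j - L|)).card : ℝ) / n)
    Filter.atTop (nhds 0)

open scoped Classical in
/-- Statistical convergence of a real double sequence. -/
def StatLim2 (x : ℕ → ℕ → ℝ) (L : ℝ) : Prop :=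
  ∀ ε > 0, Filter.Tendsto
    (fun p : ℕ × ℕ =>
      (((Finset.range p.1 ×ˢ Finset.range p.2).filter
          (fun jk => ε ≤ |x jk.1 jk.2 - L|)).card : ℝ) / (p.1 * p.2))
    Filter.atTop (nhds 0)

/-- Condition (d) on a sequence `(q_n) ⊂ (0,1)`. -/
def CondD (q : ℕ → ℝ) : Prop :=
  StatLim q 1 ∧ (∃ a < (1 : ℝ), StatLim (fun n => q n ^ n) a) ∧
    StatLim (fun n => 1 / qInt (q n) n) 0

/-- Modulus of continuity on `[0,∞)`. -/
def omegaMod (f : ℝ → ℝ) (δ : ℝ) : ℝ :=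
  sSup {d | ∃ t s : ℝ, 0 ≤ t ∧ 0 ≤ s ∧ |t - s| ≤ δ ∧ d = |f t - f s|}

/-- Bivariate modulus of continuity on `[0,∞) × [0,∞)`. -/
def omegaMod2 (f : ℝ → ℝ → ℝ) (δ₁ δ₂ : ℝ) : ℝ :=
  sSup {d | ∃ x' y' x y : ℝ, 0 ≤ x' ∧ 0 ≤ y' ∧ 0 ≤ x ∧ 0 ≤ y ∧
    |x' - x| ≤ δ₁ ∧ |y' - y| ≤ δ₂ ∧ d = |f x' y' - f x y|}

/-- The bivariate Stancu type `q`-Baskakov–Kantorovich operator. -/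
def Lop2 (q₁ q₂ α β : ℝ) (n₁ n₂ : ℕ) (φ₁ φ₂ : ℝ → ℝ) (f : ℝ → ℝ → ℝ) (x y : ℝ) : ℝ :=
  (qInt q₁ n₁ + β) * (qInt q₂ n₂ + β) *
    ∑' k₁ : ℕ, ∑' k₂ : ℕ, w q₁ φ₁ k₁ x * w q₂ φ₂ k₂ y *
      jackson q₁ (aNode q₁ α β n₁ k₁) (bNode q₁ α β n₁ k₁) (fun t =>
        jackson q₂ (aNode q₂ α β n₂ k₂) (bNode q₂ α β n₂ k₂) (fun s =>
          f (q₁ ^ (1 - (k₁ : ℤ)) * t) (q₂ ^ (1 - (k₂ : ℤ)) * s)))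

theorem stmt1 (q α β : ℝ) (hq0 : 0 < q) (hq1 : q < 1) (hα : 0 ≤ α) (hαβ : α ≤ β)
    (n : ℕ) (hn : 1 ≤ n) (k : ℕ) :
    jackson q (aNode q α β n k) (bNode q α β n k) (fun t => t) =
      (qInt q 2 * qInt q k + q ^ k * (1 + 2 * α)) / (qInt q 2 * (qInt q n + β) ^ 2) := by
  have hq1' : (1 : ℝ) + q ≠ 0 := by nlinarith
  have hq2 : q ^ 2 < 1 := by nlinarith
  have hq2' : (1 : ℝ) - q ^ 2 ≠ 0 := by nlinarith
  have hj0 : ∀ c : ℝ, jackson0 q c (fun t => t) = c ^ 2 / (1 + q) := by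
    intro c
    unfold jackson0
    have h1 : ∀ j : ℕ, q ^ j * (c * q ^ j) = c * (q ^ 2) ^ j := by
      intro j; rw [← pow_mul, mul_comm 2 j, pow_mul]; ring
    rw [tsum_congr h1, tsum_mul_left, tsum_geometric_of_lt_one (by positivity) hq2]
    field_simp
    ring
  have hD : 0 < qInt q n + β := by
    have h1 : 0 < qInt q n := by
      apply Finset.sum_pos (fun i _ => by positivity)
      exact ⟨0, Finset.mem_range.mpr hn⟩
    linarith
  have hD' : qInt q n + β ≠ 0 := ne_of_gt hD
  have hzp : q ^ ((k : ℤ) - 1) = q ^ k * q⁻¹ := by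
    rw [zpow_sub₀ (ne_of_gt hq0), zpow_natCast, zpow_one, div_eq_mul_inv]
  have hk1 : qInt q (k + 1) = qInt q k + q ^ k := Finset.sum_range_succ _ _
  have h2 : qInt q 2 = 1 + q := by
    simp [qInt, Finset.sum_range_succ]
  have hq0' : q ≠ 0 := ne_of_gt hq0
  have hqk : (q : ℝ) ^ k = 1 - (1 - q) * qInt q k := by
    have hq3 : q - 1 ≠ 0 := by nlinarith
    have := geom_sum_eq (ne_of_lt hq1) k
    unfold qInt
    rw [this]
    field_simp
    ring
  unfold jackson aNode bNode
  rw [hj0, hj0, hzp, hk1, h2, hqk]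
  field_simp
  ring

end
end

section
/- Let 0<q<1, 0 ≤ α ≤ β, n ≥ 1, φ : ℝ → ℝ and x ≥ 0. Assume w_k(x) ≥ 0 for all k ≥ 0, ∑_{k=0}^∞ w_k(x) = 1, and that the series ∑_{k=0}^∞ w_k(x)·([k]_q + q^{k-1}α)/(q^{k-1}([n]_q + β)) converges and equals [n]_q x/([n]_q + β) + α/([n]_q + β). Then L*_n(e_1; q, x) = [n]_q x/([n]_q + β) + q(1 + 2α)/([2]_q ([n]_q + β)), where e_1(t) = t. -/
/-!
The Jackson integral of `t ↦ A t` over `[a, b]` is `A (b² - a²) / [2]_q`, and since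
`b_k - a_k = 1 / ([n]_q + β)` one gets `b_k² - a_k² = ([2]_q [k]_q + q^k (1 + 2α)) / ([n]_q + β)²`.
Hence the `k`-th term of `L*_n(e_1; q, x)` is an affine combination of `w_k(x)` and the `k`-th term
of the assumed first-moment series, and the two given sums evaluate it.
-/

open scoped BigOperators

noncomputable section

open Finset

lemma qInt_two (q : ℝ) : qInt q 2 = 1 + q := by
  simp [qInt, sum_range_succ]

lemma qInt_pos {q : ℝ} (hq : 0 < q) {n : ℕ} (hn : n ≠ 0) : 0 < qInt q n :=
  sum_pos (fun i _ => pow_pos hq i) (nonempty_range_iff.mpr hn)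

lemma jackson0_const_mul_id {q : ℝ} (hq : |q| < 1) (A c : ℝ) :
    jackson0 q c (fun t => A * t) = A * c ^ 2 / qInt q 2 := by
  obtain ⟨hq₀, hq₁⟩ := abs_lt.mp hq
  have hgeo : ∑' j : ℕ, q ^ j * (A * (c * q ^ j)) = A * c * (1 - q ^ 2)⁻¹ := by
    rw [← tsum_geometric_of_norm_lt_one (by simpa using pow_lt_one₀ (abs_nonneg q) hq two_ne_zero),
      ← tsum_mul_left]
    congr 1 with j
    ring
  have h1q : 1 - q ≠ 0 := by linarith
  have h1q' : 1 + q ≠ 0 := by linarith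
  rw [jackson0, hgeo, qInt_two, show 1 - q ^ 2 = (1 - q) * (1 + q) by ring]
  field_simp

lemma jackson_const_mul_id {q : ℝ} (hq : |q| < 1) (A a b : ℝ) :
    jackson q a b (fun t => A * t) = A * (b ^ 2 - a ^ 2) / qInt q 2 := by
  rw [jackson, jackson0_const_mul_id hq, jackson0_const_mul_id hq]
  ring

lemma bNode_sq_sub_aNode_sq {q : ℝ} (hq : q ≠ 0) (α β : ℝ) (n k : ℕ) :
    bNode q α β n k ^ 2 - aNode q α β n k ^ 2 =
      (qInt q 2 * qInt q k + q ^ k * (1 + 2 * α)) / (qInt q n + β) ^ 2 := by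
  have hpow : q * q ^ ((k : ℤ) - 1) = q ^ k := by
    rw [zpow_sub_one₀ hq, zpow_natCast]; field_simp
  have hsucc : qInt q (k + 1) = qInt q k + q ^ k := sum_range_succ _ _
  -- `(1 - q) [k]_q + q^k = 1`, i.e. `b_k - a_k = 1 / ([n]_q + β)`
  have hgeom : (1 - q) * qInt q k = 1 - q ^ k := mul_neg_geom_sum q k
  rw [bNode, aNode, div_pow, div_pow, ← sub_div, qInt_two, mul_add q, ← mul_assoc, hpow, hsucc]
  congr 1
  linear_combination ((1 + q) * qInt q k + q ^ k * (1 + 2 * α)) * hgeom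

lemma jackson_aNode_bNode_zpow_mul {q : ℝ} (hq : |q| < 1) (hq₀ : q ≠ 0) (α β : ℝ) (n k : ℕ) :
    jackson q (aNode q α β n k) (bNode q α β n k) (fun t => q ^ (1 - (k : ℤ)) * t) =
      (q ^ (1 - (k : ℤ)) * qInt q k + q * (1 + 2 * α) / qInt q 2) / (qInt q n + β) ^ 2 := by
  have h2 : qInt q 2 ≠ 0 := by rw [qInt_two]; linarith [(abs_lt.mp hq).1]
  have hpow : q ^ (1 - (k : ℤ)) * q ^ k = q := by
    rw [zpow_sub₀ hq₀, zpow_natCast, zpow_one, div_mul_cancel₀ _ (pow_ne_zero k hq₀)]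
  rw [jackson_const_mul_id hq, bNode_sq_sub_aNode_sq hq₀, mul_div_assoc', div_right_comm]
  congr 1
  field_simp
  linear_combination (1 + 2 * α) * hpow

theorem stmt5_general (q α β : ℝ) (hq0 : 0 < q) (hq1 : q < 1) (hα : 0 ≤ α) (hαβ : α ≤ β)
    (n : ℕ) (hn : 1 ≤ n) (φ : ℝ → ℝ) (x : ℝ)
    (hsum : HasSum (fun k => w q φ k x) 1)
    (hsum1 : HasSum
      (fun k => w q φ k x * ((qInt q k + q ^ ((k : ℤ) - 1) * α) /
        (q ^ ((k : ℤ) - 1) * (qInt q n + β))))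
      (qInt q n * x / (qInt q n + β) + α / (qInt q n + β))) :
    Lop q α β n φ (fun t => t) x =
      qInt q n * x / (qInt q n + β) + q * (1 + 2 * α) / (qInt q 2 * (qInt q n + β)) := by
  have hq : |q| < 1 := abs_lt.mpr ⟨by linarith, hq1⟩
  have hD : qInt q n + β ≠ 0 :=
    (add_pos_of_pos_of_nonneg (qInt_pos hq0 (by omega)) (hα.trans hαβ)).ne'
  have hterms : HasSum
      (fun k => w q φ k x * jackson q (aNode q α β n k) (bNode q α β n k)
        (fun t => q ^ (1 - (k : ℤ)) * t))
      ((qInt q n * x / (qInt q n + β) + α / (qInt q n + β)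
        + (q * (1 + 2 * α) / qInt q 2 - α) / (qInt q n + β)) * (qInt q n + β)⁻¹) := by
    have hconst := hsum.mul_left ((q * (1 + 2 * α) / qInt q 2 - α) / (qInt q n + β))
    rw [mul_one] at hconst
    refine ((hsum1.add hconst).mul_right (qInt q n + β)⁻¹).congr_fun fun k => ?_
    rw [jackson_aNode_bNode_zpow_mul hq hq0.ne', zpow_sub₀ hq0.ne', zpow_sub₀ hq0.ne']
    field_simp
    ring
  rw [Lop, hterms.tsum_eq]
  field_simp
  ring

theorem stmt5 (q α β : ℝ) (hq0 : 0 < q) (hq1 : q < 1) (hα : 0 ≤ α) (hαβ : α ≤ β)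
    (n : ℕ) (hn : 1 ≤ n) (φ : ℝ → ℝ) (x : ℝ) (hx : 0 ≤ x)
    (hw : ∀ k, 0 ≤ w q φ k x)
    (hsum : HasSum (fun k => w q φ k x) 1)
    (hsum1 : HasSum
      (fun k => w q φ k x * ((qInt q k + q ^ ((k : ℤ) - 1) * α) /
        (q ^ ((k : ℤ) - 1) * (qInt q n + β))))
      (qInt q n * x / (qInt q n + β) + α / (qInt q n + β))) :
    Lop q α β n φ (fun t => t) x =
      qInt q n * x / (qInt q n + β) + q * (1 + 2 * α) / (qInt q 2 * (qInt q n + β)) :=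
  stmt5_general q α β hq0 hq1 hα hαβ n hn φ x hsum hsum1

end
end

section
/- (Statistical Korovkin theorem of Gadjiev–Orhan.) Let a < b be real numbers and let (A_n) be a sequence of positive linear operators from C[a,b] to C[a,b] (linear and monotone: f ≤ g implies A_n f ≤ A_n g). If st-lim_n ‖A_n(e_ν) − e_ν‖_{C[a,b]} = 0 for ν = 0, 1, 2, where e_ν(t) = t^ν and ‖·‖_{C[a,b]} is the supremum norm on [a,b], then st-lim_n ‖A_n(f) − f‖_{C[a,b]} = 0 for every f ∈ C[a,b]. -/
open scoped BigOperators

noncomputable section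

/-! For `ε > 0`, uniform continuity and boundedness of `f` give a constant `C` with
`|f t - f x| ≤ ε + C (t - x)²`. The right-hand side is, in `t`, a combination of `e₀, e₁, e₂`, so
applying a positive operator `T` to it bounds `‖T f - f‖` by
`ε + K (‖T e₀ - e₀‖ + ‖T e₁ - e₁‖ + ‖T e₂ - e₂‖)` with `K` depending only on `f` and `ε`.
Hence `{n | 2ε ≤ ‖A_n f - f‖}` lies in `{n | δ ≤ ∑_ν ‖A_n e_ν - e_ν‖}` for some `δ > 0`, a set of
density zero, since statistical convergence to zero is preserved by finite sums. -/

open Filter Topology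

open scoped Classical in
def HasDensityZero (P : ℕ → Prop) : Prop :=
  Tendsto (fun n => (((Finset.range n).filter P).card : ℝ) / n) atTop (𝓝 0)

namespace HasDensityZero

variable {P Q : ℕ → Prop}

theorem mono (hP : HasDensityZero P) (hQP : ∀ j, Q j → P j) : HasDensityZero Q := by
  classical
  refine squeeze_zero (fun n => by positivity) (fun n => ?_) hP
  gcongr
  exact hQP _

theorem or (hP : HasDensityZero P) (hQ : HasDensityZero Q) :
    HasDensityZero fun j => P j ∨ Q j := by
  classical
  refine squeeze_zero (fun n => by positivity) (fun n => ?_) (by simpa using hP.add hQ)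
  rw [← add_div]
  gcongr
  exact_mod_cast (Finset.card_le_card fun j hj => by
    simp only [Finset.mem_filter, Finset.mem_union] at hj ⊢
    tauto).trans (Finset.card_union_le _ _)

end HasDensityZero

theorem statLim_iff_hasDensityZero {x : ℕ → ℝ} {L : ℝ} :
    StatLim x L ↔ ∀ ε > 0, HasDensityZero fun j => ε ≤ |x j - L| :=
  Iff.rfl

namespace StatLim

variable {x y : ℕ → ℝ} {L M : ℝ}

theorem add (hx : StatLim x L) (hy : StatLim y M) :
    StatLim (fun n => x n + y n) (L + M) := by
  rw [statLim_iff_hasDensityZero] at *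
  intro ε hε
  refine ((hx (ε / 2) (by positivity)).or (hy (ε / 2) (by positivity))).mono fun j hj => ?_
  by_contra! h
  have : |x j + y j - (L + M)| ≤ |x j - L| + |y j - M| := by
    rw [add_sub_add_comm]; exact abs_add_le _ _
  linarith

theorem zero_of_abs_le_add_mul (hx : StatLim x 0)
    (h : ∀ ε > 0, ∃ K, ∀ n, |y n| ≤ ε + K * |x n|) : StatLim y 0 := by
  rw [statLim_iff_hasDensityZero] at *
  intro ε hε
  obtain ⟨K, hK⟩ := h (ε / 2) (by positivity)
  have hK' : 0 < max K 1 := lt_max_of_lt_right one_pos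
  refine (hx (ε / 2 / max K 1) (by positivity)).mono fun j hj => ?_
  rw [sub_zero] at hj ⊢
  rw [div_le_iff₀ hK']
  nlinarith [hK j, le_max_left K 1, abs_nonneg (x j)]

end StatLim

theorem ContinuousMap.exists_abs_sub_le_add_mul_dist_sq {X : Type*} [PseudoMetricSpace X]
    [CompactSpace X] (f : C(X, ℝ)) {ε : ℝ} (hε : 0 < ε) :
    ∃ C ≥ 0, ∀ t x, |f t - f x| ≤ ε + C * dist t x ^ 2 := by
  obtain ⟨δ, hδ, hfδ⟩ := Metric.uniformContinuous_iff.mp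
    (CompactSpace.uniformContinuous_of_continuous f.continuous) ε hε
  refine ⟨2 * ‖f‖ / δ ^ 2, by positivity, fun t x => ?_⟩
  by_cases htx : dist t x < δ
  · have := hfδ htx
    rw [Real.dist_eq] at this
    have : 0 ≤ 2 * ‖f‖ / δ ^ 2 * dist t x ^ 2 := by positivity
    linarith
  · have hfar : 2 * ‖f‖ ≤ 2 * ‖f‖ / δ ^ 2 * dist t x ^ 2 := by
      rw [div_mul_eq_mul_div, le_div_iff₀ (by positivity)]
      gcongr
      exact not_lt.mp htx
    have hft := f.norm_coe_le_norm t
    have hfx := f.norm_coe_le_norm x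
    rw [Real.norm_eq_abs] at hft hfx
    linarith [abs_sub (f t) (f x)]

theorem LinearMap.abs_apply_le_of_abs_le {X : Type*} [TopologicalSpace X]
    {T : C(X, ℝ) →ₗ[ℝ] C(X, ℝ)} (hT : Monotone T) {g h : C(X, ℝ)}
    (hgh : ∀ t, |g t| ≤ h t) (x : X) : |T g x| ≤ T h x := by
  have hlow : T (-h) ≤ T g := hT fun t => neg_le_of_abs_le (hgh t)
  have hupp : T g ≤ T h := hT fun t => le_of_abs_le (hgh t)
  rw [map_neg] at hlow
  refine abs_le.mpr ⟨?_, hupp x⟩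
  have : -T h x ≤ T g x := hlow x
  linarith

section Korovkin

variable {s : Set ℝ} (e : ℕ → C(s, ℝ))

theorem abs_apply_sub_le_of_monotone (he : ∀ ν (x : s), e ν x = (x : ℝ) ^ ν)
    {T : C(s, ℝ) →ₗ[ℝ] C(s, ℝ)} (hT : Monotone T) {f : C(s, ℝ)} {x : s} {ε C : ℝ} (hC : 0 ≤ C)
    (hfC : ∀ t : s, |f t - f x| ≤ ε + C * ((t : ℝ) - x) ^ 2) :
    |T f x - f x| ≤ ε + (ε + C * x ^ 2 + |f x|) * |T (e 0) x - 1|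
      + 2 * C * |(x : ℝ)| * |T (e 1) x - x| + C * |T (e 2) x - x ^ 2| := by
  set h := (ε + C * (x : ℝ) ^ 2) • e 0 - (2 * C * x) • e 1 + C • e 2
  have hTg : |T f x - f x * T (e 0) x| ≤ T h x := by
    have := LinearMap.abs_apply_le_of_abs_le hT (g := f - f x • e 0) (h := h) (fun t => by
      simp only [h, ContinuousMap.sub_apply, ContinuousMap.add_apply, ContinuousMap.smul_apply,
        smul_eq_mul, he, pow_zero, pow_one, mul_one]
      linarith [hfC t]) x
    simpa using this
  have hTh : T h x = ε + (ε + C * x ^ 2) * (T (e 0) x - 1)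
      - 2 * C * x * (T (e 1) x - x) + C * (T (e 2) x - x ^ 2) := by
    simp only [h, map_add, map_sub, map_smul, ContinuousMap.add_apply, ContinuousMap.sub_apply,
      ContinuousMap.smul_apply, smul_eq_mul]
    ring
  have hsplit : T f x - f x = (T f x - f x * T (e 0) x) + f x * (T (e 0) x - 1) := by ring
  have hε : 0 ≤ ε := by simpa using hfC x
  have h0 : (ε + C * x ^ 2) * (T (e 0) x - 1) ≤ (ε + C * x ^ 2) * |T (e 0) x - 1| :=
    mul_le_mul_of_nonneg_left (le_abs_self _) (by positivity)
  have h1 : -(2 * C * x * (T (e 1) x - x)) ≤ 2 * C * |(x : ℝ)| * |T (e 1) x - x| := by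
    simpa [abs_mul, abs_of_nonneg hC] using neg_le_abs (2 * C * x * (T (e 1) x - x))
  have h2 : C * (T (e 2) x - x ^ 2) ≤ C * |T (e 2) x - x ^ 2| :=
    mul_le_mul_of_nonneg_left (le_abs_self _) hC
  calc |T f x - f x|
      ≤ |T f x - f x * T (e 0) x| + |f x| * |T (e 0) x - 1| := by
        rw [hsplit, ← abs_mul]; exact abs_add_le _ _
    _ ≤ _ := by linarith

theorem exists_norm_sub_le_of_monotone [CompactSpace s]
    (he : ∀ ν (x : s), e ν x = (x : ℝ) ^ ν) (f : C(s, ℝ)) {ε : ℝ} (hε : 0 < ε) :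
    ∃ K, ∀ T : C(s, ℝ) →ₗ[ℝ] C(s, ℝ), Monotone T →
      ‖T f - f‖ ≤ ε + K * (‖T (e 0) - e 0‖ + ‖T (e 1) - e 1‖ + ‖T (e 2) - e 2‖) := by
  obtain ⟨C, hC, hfC⟩ := f.exists_abs_sub_le_add_mul_dist_sq hε
  set c := ‖e 1‖
  refine ⟨ε + C * c ^ 2 + ‖f‖ + 2 * C * c + C, fun T hT => ?_⟩
  have hD (ν : ℕ) (x : s) : |T (e ν) x - x ^ ν| ≤ ‖T (e ν) - e ν‖ := by
    simpa [he] using (T (e ν) - e ν).norm_coe_le_norm x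
  have hN (ν : ℕ) : 0 ≤ ‖T (e ν) - e ν‖ := norm_nonneg _
  refine (ContinuousMap.norm_le _ (by positivity)).mpr fun x => ?_
  have hx : |(x : ℝ)| ≤ c := by simpa [he] using (e 1).norm_coe_le_norm x
  have hfx : |f x| ≤ ‖f‖ := by simpa using f.norm_coe_le_norm x
  rw [ContinuousMap.sub_apply, Real.norm_eq_abs]
  calc |T f x - f x|
      ≤ ε + (ε + C * x ^ 2 + |f x|) * |T (e 0) x - 1|
        + 2 * C * |(x : ℝ)| * |T (e 1) x - x| + C * |T (e 2) x - x ^ 2| :=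
        abs_apply_sub_le_of_monotone e he hT hC fun t => by
          simpa [Subtype.dist_eq, Real.dist_eq, sq_abs] using hfC t x
    _ ≤ ε + (ε + C * c ^ 2 + ‖f‖) * ‖T (e 0) - e 0‖
        + 2 * C * c * ‖T (e 1) - e 1‖ + C * ‖T (e 2) - e 2‖ := by
        have hx2 : (x : ℝ) ^ 2 ≤ c ^ 2 := sq_le_sq' (abs_le.mp hx).1 (abs_le.mp hx).2
        have hD0 := hD 0 x
        have hD1 := hD 1 x
        simp only [pow_zero, pow_one] at hD0 hD1
        gcongr
        exact hD 2 x
    _ ≤ _ := by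
        have hK₀ : 0 ≤ ε + C * c ^ 2 + ‖f‖ := by positivity
        have hK₁ : 0 ≤ 2 * C * c := by positivity
        linarith [mul_nonneg hK₀ (hN 1), mul_nonneg hK₀ (hN 2), mul_nonneg hK₁ (hN 0),
          mul_nonneg hK₁ (hN 2), mul_nonneg hC (hN 0), mul_nonneg hC (hN 1)]

end Korovkin

theorem stmt9_general (a b : ℝ)
    (A : ℕ → C(Set.Icc a b, ℝ) →ₗ[ℝ] C(Set.Icc a b, ℝ))
    (hpos : ∀ n (f g : C(Set.Icc a b, ℝ)), f ≤ g → A n f ≤ A n g)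
    (e : ℕ → C(Set.Icc a b, ℝ)) (he : ∀ ν (x : Set.Icc a b), e ν x = (x : ℝ) ^ ν)
    (hKorovkin : ∀ ν ≤ 2, StatLim (fun n => ‖A n (e ν) - e ν‖) 0) :
    ∀ f : C(Set.Icc a b, ℝ), StatLim (fun n => ‖A n f - f‖) 0 := by
  intro f
  have hN : StatLim (fun n => ‖A n (e 0) - e 0‖ + ‖A n (e 1) - e 1‖ + ‖A n (e 2) - e 2‖) 0 := by
    simpa using ((hKorovkin 0 (by norm_num)).add (hKorovkin 1 (by norm_num))).add
      (hKorovkin 2 (by norm_num))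
  refine hN.zero_of_abs_le_add_mul fun ε hε => ?_
  obtain ⟨K, hK⟩ := exists_norm_sub_le_of_monotone e he f hε
  refine ⟨K, fun n => ?_⟩
  rw [abs_norm, abs_of_nonneg (by positivity)]
  exact hK (A n) fun f g hfg => hpos n f g hfg

theorem stmt9 (a b : ℝ) (hab : a < b)
    (A : ℕ → C(Set.Icc a b, ℝ) →ₗ[ℝ] C(Set.Icc a b, ℝ))
    (hpos : ∀ n (f g : C(Set.Icc a b, ℝ)), f ≤ g → A n f ≤ A n g)
    (e : ℕ → C(Set.Icc a b, ℝ)) (he : ∀ ν (x : Set.Icc a b), e ν x = (x : ℝ) ^ ν)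
    (hKorovkin : ∀ ν ≤ 2, StatLim (fun n => ‖A n (e ν) - e ν‖) 0) :
    ∀ f : C(Set.Icc a b, ℝ), StatLim (fun n => ‖A n f - f‖) 0 :=
  stmt9_general a b A hpos e he hKorovkin

end
end
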